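/- arXiv:2009.01150 — 2 statements merged into one kernel-verified Lean document; each statement's English description precedes it below -/
import Mathlib

section
/- For m > 1, in G = BS(m,-m), the i-th lower central subgroup decomposes as a direct product γ_iG ≅ ⟨a^{2^{i-1}m}⟩ × γ_i(ℤ * ℤ/mℤ) for all i > 1, where ⟨a^{2^{i-1}m}⟩ is infinite cyclic. -/
/-- The defining relation of the Baumslag-Solitar group `BS(m,n)`:
`t⁻¹ * a^m * t * a^(-n)`. -/
def BSrels (m n : ℤ) : Set (FreeGroup (Fin 2)) :=
  {(FreeGroup.of 1)⁻¹ * (FreeGroup.of 0) ^ m * (FreeGroup.of 1) * ((FreeGroup.of 0) ^ n)⁻¹}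

/-- The Baumslag-Solitar group `BS(m,n) = ⟨a, t ∣ t⁻¹ aᵐ t = aⁿ⟩`. -/
abbrev BS (m n : ℤ) : Type := PresentedGroup (BSrels m n)

/-- The generator `a` of `BS(m,n)`. -/
def bsa (m n : ℤ) : BS m n := PresentedGroup.of 0

/-- The generator `t` of `BS(m,n)`. -/
def bst (m n : ℤ) : BS m n := PresentedGroup.of 1

/-- The relation \`a^m = 1\` defining the free product \`ℤ * ℤ/mℤ = ⟨a, t ∣ aᵐ⟩\`. -/
def FPrels (m : ℤ) : Set (FreeGroup (Fin 2)) := {(FreeGroup.of 0) ^ m}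

/-- The free product \`ℤ * ℤ/mℤ\`, presented as \`⟨a, t ∣ aᵐ = 1⟩\`. -/
abbrev FP (m : ℤ) : Type := PresentedGroup (FPrels m)

/-- The generator \`a\` (of order \`m\`) of \`ℤ * ℤ/mℤ\`. -/
def fpa (m : ℤ) : FP m := PresentedGroup.of 0

/-- The generator \`t\` (of infinite order) of \`ℤ * ℤ/mℤ\`. -/
def fpt (m : ℤ) : FP m := PresentedGroup.of 1

/-!
The map `BS(m,-m) → ℤ * ℤ/mℤ` sending generators to generators is onto with kernel `⟨aᵐ⟩`,
and every `g` conjugates `aᵐ` to `a^(±m)` according to the parity of its `t`-exponent, so the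
kernel is centralised by `γ₂ G`. For `i ≥ 2` the induced surjection of `γ_i G` onto
`γ_i(ℤ * ℤ/mℤ)` has free target: `ℤ * ℤ/mℤ` embeds in `F ⋊ ℤ/mℤ` with `F` free, so its
derived subgroup lies in `F`. A free quotient splits, and a split extension with central kernel
is a direct product. The kernel `γ_i G ∩ ⟨aᵐ⟩` is a subgroup of the cyclic group `⟨aᵐ⟩`
containing `a^(2^(i-1) m) = [a^(2^(i-2) m), t]`, which has infinite order because `a` maps to a
rotation of infinite order in `D_∞`; hence the kernel is infinite cyclic.
-/

open Subgroup

section GroupTheory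

variable {G : Type*} [Group G]

theorem lowerCentralSeries_le_commutator {j : ℕ} (hj : 1 ≤ j) :
    (⊤ : Subgroup G).lowerCentralSeries j ≤ commutator G :=
  top_lowerCentralSeries_one (G := G) ▸ Subgroup.lowerCentralSeries_antitone (S := ⊤) hj

theorem conj_eq_zpow_of_closure_eq_top {S : Set G} (hS : closure S = ⊤) (χ : G →* ℤˣ) {x : G}
    (h : ∀ s ∈ S, s * x * s⁻¹ = x ^ (χ s : ℤ)) (g : G) : g * x * g⁻¹ = x ^ (χ g : ℤ) := by
  have hg : g ∈ closure S := hS ▸ mem_top g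
  induction hg using closure_induction with
  | mem s hs => exact h s hs
  | one => simp
  | mul g g' _ _ hg hg' =>
    rw [map_mul, Units.val_mul, zpow_mul, ← hg, conj_zpow, ← hg']
    group
  | inv g _ hg =>
    have hu : (χ g : ℤ) * χ g = 1 := by rw [← Units.val_mul, Int.units_mul_self, Units.val_one]
    calc g⁻¹ * x * g⁻¹⁻¹ = g⁻¹ * x ^ ((χ g : ℤ) * χ g) * g⁻¹⁻¹ := by rw [hu, zpow_one]
      _ = g⁻¹ * (g * x * g⁻¹) ^ (χ g : ℤ) * g⁻¹⁻¹ := by rw [zpow_mul, hg]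
      _ = x ^ (χ g⁻¹ : ℤ) := by rw [conj_zpow, map_inv, Int.units_inv_eq_self]; group

theorem IsOfFinOrder.of_zpow {x : G} {k : ℤ} (hk : k ≠ 0) (h : IsOfFinOrder (x ^ k)) :
    IsOfFinOrder x := by
  obtain ⟨n, hn, hxn⟩ := isOfFinOrder_iff_zpow_eq_one.mp h
  exact isOfFinOrder_iff_zpow_eq_one.mpr ⟨k * n, mul_ne_zero hk hn, by rwa [zpow_mul]⟩

theorem nonempty_mulEquiv_zpowers_of_le_zpowers {x y : G} {H : Subgroup G}
    (hHx : H ≤ zpowers x) (hyH : y ∈ H) (hy : ¬IsOfFinOrder y) : Nonempty (H ≃* zpowers y) := by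
  have := isCyclic_of_le hHx
  have : Infinite H := by
    rw [← not_finite_iff_infinite]
    intro
    exact hy (H.subtype.isOfFinOrder (isOfFinOrder_of_finite (⟨y, hyH⟩ : H)))
  exact ⟨mulEquivOfCyclicCardEq (by
    rw [Nat.card_eq_zero_of_infinite, Nat.card_zpowers, orderOf_eq_zero_iff.mpr hy])⟩

theorem MonoidHom.exists_comp_eq_id_of_isFreeGroup {E Q : Type*} [Group E] [Group Q]
    [IsFreeGroup Q] (q : E →* Q) (hq : Function.Surjective q) :
    ∃ s : Q →* E, q.comp s = MonoidHom.id Q := by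
  choose g hg using hq
  exact ⟨IsFreeGroup.lift (g ∘ IsFreeGroup.of), IsFreeGroup.ext_hom fun b => by simp [hg]⟩

theorem Subgroup.nonempty_inf_ker_prod_map_mulEquiv {Q : Type*} [Group Q] (p : G →* Q)
    (K : Subgroup G) [IsFreeGroup (K.map p)] (hc : ∀ x ∈ K ⊓ p.ker, ∀ y ∈ K, Commute x y) :
    Nonempty ((K ⊓ p.ker : Subgroup G) × K.map p ≃* K) := by
  set q := p.subgroupMap K
  obtain ⟨s, hs⟩ := q.exists_comp_eq_id_of_isFreeGroup (p.subgroupMap_surjective K)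
  have hqs (y : K.map p) : q (s y) = y := DFunLike.congr_fun hs y
  have hqk (k : ↥(K ⊓ p.ker)) : q (inclusion inf_le_left k) = 1 := Subtype.ext (mem_inf.mp k.2).2
  let f := MonoidHom.noncommCoprod (inclusion inf_le_left) s
    fun k y => Subtype.ext (hc k k.2 (s y) (s y).2).eq
  have hf (k : ↥(K ⊓ p.ker)) (y : K.map p) : f (k, y) = inclusion inf_le_left k * s y := rfl
  refine ⟨MulEquiv.ofBijective f ⟨(injective_iff_map_eq_one f).mpr ?_, fun x => ?_⟩⟩
  · rintro ⟨k, y⟩ hky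
    rw [hf] at hky
    have hy : y = 1 := by simpa [hqs, hqk] using congrArg q hky
    subst hy
    rw [map_one, mul_one, ← Subtype.val_inj] at hky
    exact Prod.ext (Subtype.ext hky) rfl
  · have hpx : p x = p (s (q x)) := congrArg Subtype.val (hqs (q x)).symm
    have hk : (x : G) * (s (q x) : G)⁻¹ ∈ K ⊓ p.ker :=
      mem_inf.mpr ⟨mul_mem x.2 (inv_mem (s _).2), by simp [hpx]⟩
    exact ⟨(⟨_, hk⟩, q x), Subtype.ext (by simp [hf])⟩

theorem isFreeGroup_of_injective {F : Type*} [Group F] [IsFreeGroup F] (f : G →* F)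
    (hf : Function.Injective f) : IsFreeGroup G :=
  IsFreeGroup.ofMulEquiv (MonoidHom.ofInjective hf).symm

theorem SemidirectProduct.isFreeGroup_of_le_commutator {N A : Type*} [Group N] [IsFreeGroup N]
    [CommGroup A] {φ : A →* MulAut N} (f : G →* N ⋊[φ] A) (hf : Function.Injective f)
    {H : Subgroup G} (hH : H ≤ commutator G) : IsFreeGroup H := by
  have hinl (h : H) : f h ∈ (inl : N →* N ⋊[φ] A).range := by
    rw [range_inl_eq_ker_rightHom]
    exact Abelianization.commutator_subset_ker (rightHom.comp f) (hH h.2)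
  have : IsFreeGroup (inl : N →* N ⋊[φ] A).range :=
    IsFreeGroup.ofMulEquiv (MonoidHom.ofInjective inl_injective)
  exact isFreeGroup_of_injective ((f.comp H.subtype).codRestrict _ hinl)
    fun a b hab => Subtype.ext (hf (congrArg Subtype.val hab))

def FreeGroup.mulLeftAut (C : Type*) [Group C] : C →* MulAut (FreeGroup C) where
  toFun c := FreeGroup.freeGroupCongr (Equiv.mulLeft c)
  map_one' := MulEquiv.toMonoidHom_injective <| FreeGroup.ext_hom _ _ fun _ => by simp
  map_mul' _ _ := MulEquiv.toMonoidHom_injective <|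
    FreeGroup.ext_hom _ _ fun _ => by simp [mul_assoc]

end GroupTheory

namespace BS

variable {m n : ℤ} {H : Type*} [Group H]

theorem bst_inv_mul_bsa_zpow_mul_bst : (bst m n)⁻¹ * bsa m n ^ m * bst m n = bsa m n ^ n := by
  have h := PresentedGroup.one_of_mem (rels := BSrels m n) rfl
  simp only [map_mul, map_inv, map_zpow] at h
  exact mul_inv_eq_one.mp h

def lift (x y : H) (h : y⁻¹ * x ^ m * y = x ^ n) : BS m n →* H :=
  PresentedGroup.toGroup (f := ![x, y]) (by rintro _ rfl; simp [h])

@[simp]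
theorem lift_bsa {x y : H} (h : y⁻¹ * x ^ m * y = x ^ n) : lift x y h (bsa m n) = x :=
  PresentedGroup.toGroup.of _

@[simp]
theorem lift_bst {x y : H} (h : y⁻¹ * x ^ m * y = x ^ n) : lift x y h (bst m n) = y :=
  PresentedGroup.toGroup.of _

theorem hom_ext {f g : BS m n →* H} (ha : f (bsa m n) = g (bsa m n))
    (ht : f (bst m n) = g (bst m n)) : f = g :=
  PresentedGroup.ext fun i => by fin_cases i <;> assumption

theorem closure_bsa_bst : closure {bsa m n, bst m n} = ⊤ := by
  rw [← PresentedGroup.closure_range_of]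
  congr 1
  ext g
  simp [Fin.exists_fin_two, bsa, bst, eq_comm]

end BS

namespace FP

variable {m : ℤ} {H : Type*} [Group H]

theorem fpa_zpow_self : fpa m ^ m = 1 := by
  have h := PresentedGroup.one_of_mem (rels := FPrels m) rfl
  rwa [map_zpow] at h

def lift (x y : H) (h : x ^ m = 1) : FP m →* H :=
  PresentedGroup.toGroup (f := ![x, y]) (by rintro _ rfl; simp [h])

@[simp]
theorem lift_fpa {x y : H} (h : x ^ m = 1) : lift x y h (fpa m) = x :=
  PresentedGroup.toGroup.of _

@[simp]
theorem lift_fpt {x y : H} (h : x ^ m = 1) : lift x y h (fpt m) = y :=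
  PresentedGroup.toGroup.of _

theorem hom_ext {f g : FP m →* H} (ha : f (fpa m) = g (fpa m)) (ht : f (fpt m) = g (fpt m)) :
    f = g :=
  PresentedGroup.ext fun i => by fin_cases i <;> assumption

open SemidirectProduct

/- `ℤ * ℤ/mℤ ≅ F ⋊ C` with `C = ⟨a⟩` and `F` free on the conjugates `c t c⁻¹`, `c ∈ C`;
indexing the free generators by `C` itself avoids any arithmetic in `ℤ/mℤ`. -/
def toSemidirect : FP m →* FreeGroup (zpowers (fpa m)) ⋊[FreeGroup.mulLeftAut _] zpowers (fpa m) :=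
  FP.lift (inr ⟨fpa m, mem_zpowers _⟩) (inl (FreeGroup.of 1))
    (by rw [← map_zpow, ← map_one inr]; congr 1; exact Subtype.ext fpa_zpow_self)

def ofSemidirect :
    FreeGroup (zpowers (fpa m)) ⋊[FreeGroup.mulLeftAut _] zpowers (fpa m) →* FP m :=
  SemidirectProduct.lift (FreeGroup.lift fun c => c * fpt m * c⁻¹) (zpowers (fpa m)).subtype
    fun _ => FreeGroup.ext_hom _ _ fun _ => by simp [FreeGroup.mulLeftAut, mul_assoc]

theorem ofSemidirect_comp_toSemidirect :
    ofSemidirect.comp toSemidirect = MonoidHom.id (FP m) :=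
  FP.hom_ext (by simp [ofSemidirect, toSemidirect]) (by simp [ofSemidirect, toSemidirect])

theorem isFreeGroup_of_le_commutator {H : Subgroup (FP m)} (hH : H ≤ commutator (FP m)) :
    IsFreeGroup H := by
  let : CommGroup (zpowers (fpa m)) := IsCyclic.commGroup
  have hinj : Function.Injective (toSemidirect (m := m)) :=
    Function.LeftInverse.injective (g := ofSemidirect)
      (DFunLike.congr_fun ofSemidirect_comp_toSemidirect)
  exact SemidirectProduct.isFreeGroup_of_le_commutator (N := FreeGroup (zpowers (fpa m)))
    (A := zpowers (fpa m)) toSemidirect hinj hH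

end FP

namespace BS

variable {m : ℤ}

open scoped commutatorElement

theorem bst_mul_bsa_zpow_self_mul_bst_inv :
    bst m (-m) * bsa m (-m) ^ m * (bst m (-m))⁻¹ = (bsa m (-m) ^ m)⁻¹ := by
  have h : (bst m (-m))⁻¹ * bsa m (-m) ^ m * bst m (-m) = (bsa m (-m) ^ m)⁻¹ := by
    rw [bst_inv_mul_bsa_zpow_mul_bst, zpow_neg]
  conv_lhs => rw [← inv_inv (bsa m (-m) ^ m), ← h]
  group

def sign : BS m (-m) →* ℤˣ := lift 1 (-1) (by simp)

theorem conj_bsa_zpow_self (g : BS m (-m)) :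
    g * bsa m (-m) ^ m * g⁻¹ = (bsa m (-m) ^ m) ^ (sign g : ℤ) := by
  refine conj_eq_zpow_of_closure_eq_top closure_bsa_bst sign ?_ g
  rintro s (rfl | rfl)
  · simp only [sign, lift_bsa, Units.val_one, zpow_one]
    group
  · simpa [sign] using bst_mul_bsa_zpow_self_mul_bst_inv

instance normal_zpowers_bsa_zpow_self : (zpowers (bsa m (-m) ^ m)).Normal where
  conj_mem y hy g := by
    obtain ⟨k, rfl⟩ := mem_zpowers_iff.mp hy
    rw [← conj_zpow, conj_bsa_zpow_self, ← zpow_mul]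
    exact zpow_mem (mem_zpowers _) _

theorem commute_of_mem_commutator {g x : BS m (-m)} (hg : g ∈ commutator (BS m (-m)))
    (hx : x ∈ zpowers (bsa m (-m) ^ m)) : Commute g x := by
  have hsign : sign g = 1 := Abelianization.commutator_subset_ker sign hg
  obtain ⟨k, rfl⟩ := mem_zpowers_iff.mp hx
  refine Commute.zpow_right ?_ k
  have h := conj_bsa_zpow_self g
  rwa [hsign, Units.val_one, zpow_one, mul_inv_eq_iff_eq_mul] at h

theorem not_isOfFinOrder_bsa : ¬IsOfFinOrder (bsa m (-m)) := by
  let f : BS m (-m) →* DihedralGroup 0 :=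
    lift (.r 1) (.sr 0) (by simp [DihedralGroup.sr_mul_r, DihedralGroup.sr_mul_sr])
  intro h
  have := f.isOfFinOrder h
  rw [lift_bsa] at this
  exact orderOf_eq_zero_iff.mp DihedralGroup.orderOf_r_one this

theorem bsa_zpow_mem_lowerCentralSeries (j : ℕ) :
    bsa m (-m) ^ (2 ^ j * m) ∈ (⊤ : Subgroup (BS m (-m))).lowerCentralSeries j := by
  induction j with
  | zero => exact mem_top _
  | succ j ih =>
    rw [mul_comm, zpow_mul] at ih ⊢
    have hc : ⁅(bsa m (-m) ^ m) ^ (2 ^ j : ℤ), bst m (-m)⁆ =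
        (bsa m (-m) ^ m) ^ (2 ^ (j + 1) : ℤ) := by
      rw [commutatorElement_def, mul_assoc (_ ^ _), mul_assoc (_ ^ _), ← zpow_neg, ← conj_zpow,
        bst_mul_bsa_zpow_self_mul_bst_inv, inv_zpow', neg_neg, ← zpow_add, pow_succ, mul_two]
    rw [← hc]
    exact commutator_mem_commutator ih (mem_top _)

def toFP : BS m (-m) →* FP m := lift (fpa m) (fpt m) (by simp [FP.fpa_zpow_self])

theorem toFP_surjective : Function.Surjective (toFP (m := m)) := by
  rw [← MonoidHom.range_eq_top, eq_top_iff, ← PresentedGroup.closure_range_of, closure_le]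
  rintro _ ⟨i, rfl⟩
  fin_cases i
  exacts [⟨bsa m (-m), lift_bsa _⟩, ⟨bst m (-m), lift_bst _⟩]

theorem ker_toFP : (toFP (m := m)).ker = zpowers (bsa m (-m) ^ m) := by
  refine le_antisymm (fun x hx => ?_) (zpowers_le.mpr (by simp [toFP, FP.fpa_zpow_self]))
  let ψ : FP m →* BS m (-m) ⧸ zpowers (bsa m (-m) ^ m) :=
    FP.lift (bsa m (-m) : BS m (-m) ⧸ _) (bst m (-m) : BS m (-m) ⧸ _)
      (by rw [← QuotientGroup.mk_zpow, QuotientGroup.eq_one_iff]; exact mem_zpowers _)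
  have hψ : ψ.comp toFP = QuotientGroup.mk' _ := hom_ext (by simp [ψ, toFP]) (by simp [ψ, toFP])
  rw [← QuotientGroup.eq_one_iff, ← QuotientGroup.mk'_apply, ← hψ, MonoidHom.comp_apply,
    MonoidHom.mem_ker.mp hx, map_one]

end BS

/-- For `m > 1` and `G = BS(m,-m)`, the `i`-th lower central subgroup (for `i > 1`,
i.e. `lowerCentralSeries` index `j = i - 1 ≥ 1`) decomposes as a direct product
`γ_i G ≅ ⟨a^(2^(i-1) m)⟩ × γ_i(ℤ * ℤ/mℤ)`, where `⟨a^(2^(i-1) m)⟩` is infinite cyclic. -/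
theorem bs_m_neg_m_lcs_iso (m : ℤ) (hm : 1 < m) :
    ∀ j : ℕ, 1 ≤ j →
      Nonempty (((⊤ : Subgroup (BS m (-m))).lowerCentralSeries j) ≃*
        (Subgroup.zpowers (bsa m (-m) ^ (2 ^ j * m)) × (⊤ : Subgroup (FP m)).lowerCentralSeries j)) ∧
      ¬ IsOfFinOrder (bsa m (-m) ^ (2 ^ j * m)) := by
  intro j hj
  set K := (⊤ : Subgroup (BS m (-m))).lowerCentralSeries j
  have hmap : K.map BS.toFP = (⊤ : Subgroup (FP m)).lowerCentralSeries j := by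
    rw [map_lowerCentralSeries, map_top_of_surjective _ BS.toFP_surjective]
  have : IsFreeGroup (K.map BS.toFP) :=
    hmap ▸ FP.isFreeGroup_of_le_commutator (lowerCentralSeries_le_commutator hj)
  have hinf : ¬IsOfFinOrder (bsa m (-m) ^ (2 ^ j * m)) :=
    fun h => BS.not_isOfFinOrder_bsa (h.of_zpow (by positivity))
  obtain ⟨e⟩ := K.nonempty_inf_ker_prod_map_mulEquiv BS.toFP fun x hx y hy =>
    (BS.commute_of_mem_commutator (lowerCentralSeries_le_commutator hj hy)
      (BS.ker_toFP ▸ (mem_inf.mp hx).2)).symm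
  have hmem : bsa m (-m) ^ (2 ^ j * m) ∈ K ⊓ BS.toFP.ker := by
    refine mem_inf.mpr ⟨BS.bsa_zpow_mem_lowerCentralSeries j, ?_⟩
    rw [BS.ker_toFP, mul_comm, zpow_mul]
    exact zpow_mem (mem_zpowers _) _
  obtain ⟨c⟩ :=
    nonempty_mulEquiv_zpowers_of_le_zpowers (inf_le_right.trans BS.ker_toFP.le) hmem hinf
  exact ⟨⟨e.symm.trans (c.prodCongr (MulEquiv.subgroupCongr hmap))⟩, hinf⟩
end

section
/- For m > 1, in G = BS(m, m+1) = ⟨a,t | t⁻¹aᵐt = a^{m+1}⟩ one has a = [aᵐ, t] ∈ γ₂G, hence γ₂G = γ₃G = γ_ωG ≠ 1; the lower central series of G has length 2. -/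
/-! In `BS(m, m+1)` the relation gives `a = ⁅a⁻ᵐ, t⁻¹⁆`, so `a` lies in every term of the lower
central series, and hence so does its normal closure `N`. Modulo `N` the group is cyclic, generated
by the image of `t`, so `γ₂G ≤ N` and therefore `γ₂G = γ_ωG`. The element `a` survives in the affine
representation `a ↦ (x ↦ x + 1)`, `t ↦ (x ↦ m x / (m + 1))` on `ℚ`, and `t` survives in the
abelianization `t ↦ 1 ∈ ℤ`, so `γ_ωG ≠ 1` and `γ₁G ≠ γ₂G`. -/

open scoped commutatorElement

theorem Equiv.constVAdd_zpow {V P : Type*} [AddGroup V] [AddTorsor V P] (v : V) (k : ℤ) :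
    Equiv.constVAdd P v ^ k = Equiv.constVAdd P (k • v) :=
  (map_zpow (Equiv.constVAddHom V P) (.ofAdd v) k).symm

namespace Subgroup

variable {G : Type*} [Group G]

theorem mem_top_lowerCentralSeries_of_eq_commutatorElement {a g : G} {k : ℤ}
    (h : a = ⁅a ^ k, g⁆) (n : ℕ) : a ∈ (⊤ : Subgroup G).lowerCentralSeries n := by
  induction n with
  | zero => exact mem_top a
  | succ n ih =>
    rw [h]
    exact commutator_mem_commutator (zpow_mem ih k) (mem_top g)

theorem normalClosure_le_iInf_top_lowerCentralSeries {a g : G} {k : ℤ}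
    (h : a = ⁅a ^ k, g⁆) : normalClosure {a} ≤ ⨅ n, (⊤ : Subgroup G).lowerCentralSeries n := by
  refine normalClosure_le_normal ?_
  rintro _ rfl
  exact mem_iInf.2 (mem_top_lowerCentralSeries_of_eq_commutatorElement h)

theorem commutator_le_normalClosure_of_closure_pair_eq_top {a t : G}
    (hG : closure {a, t} = ⊤) : _root_.commutator G ≤ normalClosure {a} := by
  set N := normalClosure ({a} : Set G)
  have hcyc : IsCyclic (G ⧸ N) := by
    refine ⟨QuotientGroup.mk t, fun x => ?_⟩
    obtain ⟨x, rfl⟩ := QuotientGroup.mk_surjective x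
    have hle : closure {a, t} ≤
        (zpowers (QuotientGroup.mk t : G ⧸ N)).comap (QuotientGroup.mk' N) := by
      rw [closure_le, Set.insert_subset_iff, Set.singleton_subset_iff]
      refine ⟨?_, mem_zpowers _⟩
      rw [SetLike.mem_coe, mem_comap, QuotientGroup.mk'_apply,
        (QuotientGroup.eq_one_iff (N := N) a).2 (subset_normalClosure rfl)]
      exact one_mem _
    exact hle (hG ▸ mem_top x)
  let _ := IsCyclic.commGroup (α := G ⧸ N)
  simpa using Abelianization.commutator_subset_ker (QuotientGroup.mk' N)

theorem top_lowerCentralSeries_one_eq_iInf {a t g : G} {k : ℤ} (hG : closure {a, t} = ⊤)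
    (h : a = ⁅a ^ k, g⁆) :
    (⊤ : Subgroup G).lowerCentralSeries 1 = ⨅ n, (⊤ : Subgroup G).lowerCentralSeries n :=
  le_antisymm
    ((commutator_le_normalClosure_of_closure_pair_eq_top hG).trans
      (normalClosure_le_iInf_top_lowerCentralSeries h))
    (iInf_le _ 1)

end Subgroup

open Subgroup

section BaumslagSolitar

variable (m n : ℤ)

theorem bst_inv_mul_bsa_zpow_mul_bst : (bst m n)⁻¹ * bsa m n ^ m * bst m n = bsa m n ^ n := by
  have h := PresentedGroup.one_of_mem (Set.mem_singleton _ : _ ∈ BSrels m n)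
  simp only [map_mul, map_inv, map_zpow] at h
  exact mul_inv_eq_one.1 h

theorem closure_bsa_bst : closure {bsa m n, bst m n} = ⊤ := by
  rw [← PresentedGroup.closure_range_of]
  congr 1
  ext x
  simp [Fin.exists_fin_two, bsa, bst, eq_comm]

theorem bst_notMem_commutator : bst m n ∉ commutator (BS m n) := by
  let deg : BS m n →* Multiplicative ℤ :=
    PresentedGroup.toGroup (f := ![1, .ofAdd 1]) (by rintro _ rfl; simp)
  intro ht
  have := Abelianization.commutator_subset_ker deg ht
  simp [deg, bst] at this

theorem bsa_ne_one {m n : ℤ} (hm : m ≠ 0) (hn : n ≠ 0) : bsa m n ≠ 1 := by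
  have hc : (m / n : ℚ) ≠ 0 := by positivity
  let ρ : BS m n →* Equiv.Perm ℚ :=
    PresentedGroup.toGroup (f := ![Equiv.constVAdd ℚ 1, Equiv.mulRight₀ _ hc]) (by
      rintro _ rfl
      simp only [map_mul, map_inv, map_zpow, FreeGroup.lift_apply_of, Matrix.cons_val_zero,
        Matrix.cons_val_one, ← zpow_neg, Equiv.constVAdd_zpow]
      ext x
      simp only [zsmul_eq_mul, mul_one, neg_smul, Equiv.Perm.coe_mul, Equiv.Perm.coe_inv,
        Equiv.mulRight₀_symm_apply, Equiv.mulRight₀_apply, Equiv.coe_constVAdd, vadd_eq_add,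
        Function.comp_apply, Equiv.Perm.coe_one, id_eq]
      field_simp
      ring)
  intro ha
  have := congrArg (fun g => ρ g 0) ha
  simp [ρ, bsa] at this

theorem bsa_eq_commutatorElement : bsa m (m + 1) = ⁅bsa m (m + 1) ^ (-m), (bst m (m + 1))⁻¹⁆ := by
  calc bsa m (m + 1)
      = bsa m (m + 1) ^ (-m) * ((bst m (m + 1))⁻¹ * bsa m (m + 1) ^ m * bst m (m + 1)) := by
        rw [bst_inv_mul_bsa_zpow_mul_bst, ← zpow_add]; simp
    _ = ⁅bsa m (m + 1) ^ (-m), (bst m (m + 1))⁻¹⁆ := by rw [commutatorElement_def]; group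

end BaumslagSolitar

/-- For `m > 1` and `G = BS(m, m+1)` one has `a = [aᵐ,t] = (aᵐ)⁻¹ t⁻¹ aᵐ t ∈ γ₂G`,
hence `γ₂G = γ₃G = γ_ωG ≠ 1`: the lower central series of `G` has length `2`
(`γ₂G = γ₃G` but `γ₁G ≠ γ₂G`). -/
theorem bs_m_m_add_one_lcs_length_two (m : ℤ) (hm : 1 < m) :
    (bsa m (m + 1) =
      (bsa m (m + 1) ^ m)⁻¹ * (bst m (m + 1))⁻¹ * bsa m (m + 1) ^ m * bst m (m + 1)) ∧
    (bsa m (m + 1) ∈ (⊤ : Subgroup (BS m (m + 1))).lowerCentralSeries 1) ∧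
    ((⊤ : Subgroup (BS m (m + 1))).lowerCentralSeries 1 = (⊤ : Subgroup (BS m (m + 1))).lowerCentralSeries 2) ∧
    ((⊤ : Subgroup (BS m (m + 1))).lowerCentralSeries 1 = ⨅ i : ℕ, (⊤ : Subgroup (BS m (m + 1))).lowerCentralSeries i) ∧
    ((⨅ i : ℕ, (⊤ : Subgroup (BS m (m + 1))).lowerCentralSeries i) ≠ ⊥) ∧
    ((⊤ : Subgroup (BS m (m + 1))).lowerCentralSeries 0 ≠ (⊤ : Subgroup (BS m (m + 1))).lowerCentralSeries 1) := by
  have hcomm := bsa_eq_commutatorElement m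
  have hinf := top_lowerCentralSeries_one_eq_iInf (closure_bsa_bst m (m + 1)) hcomm
  have ha : bsa m (m + 1) ∈ ⨅ i : ℕ, (⊤ : Subgroup (BS m (m + 1))).lowerCentralSeries i :=
    normalClosure_le_iInf_top_lowerCentralSeries hcomm (subset_normalClosure rfl)
  refine ⟨?_, hinf ▸ ha, ?_, hinf, ?_, ?_⟩
  · simpa [commutatorElement_def, zpow_neg, mul_assoc] using hcomm
  · exact le_antisymm (hinf ▸ iInf_le _ 2) (Subgroup.lowerCentralSeries_antitone _ one_le_two)
  · exact fun h => bsa_ne_one (by omega) (by omega) (mem_bot.1 (h ▸ ha))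
  · intro h
    rw [top_lowerCentralSeries_one] at h
    exact bst_notMem_commutator m (m + 1) (h ▸ mem_top _)
end
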